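/- (Hahn's relation between Jackson's first and second q-Bessel functions, series form.) Let q ∈ ℂ with 0 < |q| < 1, let a ∈ ℂ be such that a q^j ≠ 1 for every integer j ≥ 1 (so (aq;q)_n ≠ 0 for all n), and let z ∈ ℂ with |z| < 1. Then ∑_{n≥0} q^{n²} a^n z^n / ( (aq;q)_n (q;q)_n ) = (z;q)_∞ · ∑_{n≥0} z^n / ( (aq;q)_n (q;q)_n ). Taking a = q^ν and z = −x²/4, this is equivalent to the identity J_ν^{(2)}(x;q) = (−x²/4;q)_∞ · J_ν^{(1)}(x;q). -/

import Mathlib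

open scoped BigOperators

/-- The finite q-Pochhammer symbol `(a;q)_n`. -/
noncomputable def qPoch (q a : ℂ) (n : ℕ) : ℂ := ∏ j ∈ Finset.range n, (1 - a * q ^ j)

/-- The infinite q-Pochhammer symbol `(a;q)_∞`. -/
noncomputable def qPochInf (q a : ℂ) : ℂ := ∏' j : ℕ, (1 - a * q ^ j)

/-!
Expand `(z;q)_∞` by Euler's series `∑ (-1)^k q^(k choose 2) z^k / (q;q)_k`, which is the limit of
the finite q-binomial theorem for `(z;q)_n` by dominated convergence, and multiply it with the
right-hand series as a Cauchy product. After clearing `(aq;q)_n (q;q)_n`, the `n`-th coefficient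
becomes the finite identity `∑_m (-1)^m q^(m choose 2) [n, m]_q (x q^(n-m);q)_m = q^(n(n-1)) x^n`
at `x = aq`. Expanding each `(x q^(n-m);q)_m` by the q-binomial theorem and exchanging the sums,
the coefficient of `x^j` is a multiple of `(1;q)_(n-j)`, which vanishes unless `j = n`.
-/

open Finset Filter Topology

theorem Nat.choose_two_add (m n : ℕ) : (m + n).choose 2 = m.choose 2 + n.choose 2 + m * n := by
  induction n with
  | zero => simp
  | succ n ih => rw [← add_assoc, Nat.choose_succ_succ', Nat.choose_succ_succ', ih]; simp; ring

theorem Nat.two_mul_choose_two_add_self (n : ℕ) : 2 * n.choose 2 + n = n ^ 2 := by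
  induction n with
  | zero => simp
  | succ n ih => rw [Nat.choose_succ_succ', Nat.choose_one_right]; nlinarith

section Finite

variable {q : ℂ}

theorem qPoch_zero (q a : ℂ) : qPoch q a 0 = 1 := prod_range_zero _

theorem qPoch_succ (q a : ℂ) (n : ℕ) : qPoch q a (n + 1) = qPoch q a n * (1 - a * q ^ n) :=
  prod_range_succ _ _

theorem qPoch_add (q a : ℂ) (m n : ℕ) :
    qPoch q a (m + n) = qPoch q a m * qPoch q (a * q ^ m) n := by
  simp only [qPoch, prod_range_add, pow_add, mul_assoc]

theorem qPoch_one_eq_zero (q : ℂ) {n : ℕ} (hn : n ≠ 0) : qPoch q 1 n = 0 :=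
  prod_eq_zero (mem_range.mpr (Nat.pos_of_ne_zero hn)) (by simp)

theorem qPoch_ne_zero {a : ℂ} (ha : ∀ j, 1 - a * q ^ j ≠ 0) (n : ℕ) : qPoch q a n ≠ 0 :=
  prod_ne_zero_iff.mpr fun j _ => ha j

noncomputable def qBinom (q : ℂ) (n k : ℕ) : ℂ :=
  if k ≤ n then qPoch q q n / (qPoch q q k * qPoch q q (n - k)) else 0

theorem qBinom_of_le {n k : ℕ} (h : k ≤ n) :
    qBinom q n k = qPoch q q n / (qPoch q q k * qPoch q q (n - k)) := if_pos h

theorem qBinom_of_lt {n k : ℕ} (h : n < k) : qBinom q n k = 0 := if_neg (by omega)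

noncomputable def eulerCoeff (q : ℂ) (k : ℕ) : ℂ := (-1) ^ k * q ^ k.choose 2 / qPoch q q k

variable (hq : ∀ n, qPoch q q n ≠ 0)
include hq

theorem qBinom_zero_right (n : ℕ) : qBinom q n 0 = 1 := by
  rw [qBinom_of_le n.zero_le, Nat.sub_zero, qPoch_zero, one_mul, div_self (hq n)]

theorem qBinom_self (n : ℕ) : qBinom q n n = 1 := by
  rw [qBinom_of_le le_rfl, Nat.sub_self, qPoch_zero, mul_one, div_self (hq n)]

theorem qBinom_succ_succ {n k : ℕ} (hk : k ≤ n) :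
    qBinom q (n + 1) (k + 1) = qBinom q n (k + 1) + q ^ (n - k) * qBinom q n k := by
  obtain ⟨d, rfl⟩ := Nat.exists_eq_add_of_le hk
  rcases d with _ | d
  · simp only [Nat.add_zero, Nat.sub_self, pow_zero, one_mul]
    rw [qBinom_self hq, qBinom_of_lt (by omega), qBinom_self hq, zero_add]
  have factor_ne : ∀ m, 1 - q * q ^ m ≠ 0 := fun m h => hq (m + 1) (by rw [qPoch_succ, h, mul_zero])
  rw [qBinom_of_le (by omega), qBinom_of_le (by omega), qBinom_of_le (by omega),
    show k + (d + 1) + 1 - (k + 1) = d + 1 by omega, show k + (d + 1) - (k + 1) = d by omega,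
    show k + (d + 1) - k = d + 1 by omega, qPoch_succ q q (k + (d + 1)), qPoch_succ q q k,
    qPoch_succ q q d]
  have := hq (k + (d + 1)); have := hq k; have := hq d
  have := factor_ne k; have := factor_ne d
  field_simp
  ring

theorem qBinom_mul_qBinom {n m j : ℕ} (hj : j ≤ m) (hm : m ≤ n) :
    qBinom q n m * qBinom q m j = qBinom q n j * qBinom q (n - j) (m - j) := by
  obtain ⟨d, rfl⟩ := Nat.exists_eq_add_of_le hj
  obtain ⟨e, rfl⟩ := Nat.exists_eq_add_of_le hm
  rw [qBinom_of_le hm, qBinom_of_le hj, qBinom_of_le (by omega), qBinom_of_le (by omega),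
    show j + d + e - (j + d) = e by omega, show j + d - j = d by omega,
    show j + d + e - j = d + e by omega, show d + e - d = e by omega]
  have := hq (j + d); have := hq j; have := hq d; have := hq e; have := hq (j + d + e)
  have := hq (d + e)
  field_simp

theorem qPoch_eq_sum_qBinom (x : ℂ) (n : ℕ) :
    qPoch q x n = ∑ k ∈ range (n + 1), (-1) ^ k * q ^ k.choose 2 * qBinom q n k * x ^ k := by
  induction n with
  | zero => simp [qPoch_zero, qBinom_self hq]
  | succ n ih =>
    set t : ℕ → ℕ → ℂ := fun n k => (-1) ^ k * q ^ k.choose 2 * qBinom q n k * x ^ k with ht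
    have pascal : ∀ k ∈ range (n + 1), t (n + 1) (k + 1) = t n (k + 1) - x * q ^ n * t n k := by
      intro k hk
      obtain ⟨d, rfl⟩ := Nat.exists_eq_add_of_le (Nat.lt_succ_iff.mp (mem_range.mp hk))
      simp only [ht]
      rw [qBinom_succ_succ hq (by omega), Nat.add_sub_cancel_left, Nat.choose_succ_succ',
        Nat.choose_one_right]
      ring
    have top : t n (n + 1) = 0 := by simp [ht, qBinom_of_lt (Nat.lt_succ_self n)]
    calc qPoch q x (n + 1) = (∑ k ∈ range (n + 1), t n k) * (1 - x * q ^ n) := by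
          rw [qPoch_succ, ih]
      _ = ∑ k ∈ range (n + 1), t n (k + 1) + t n 0 - x * q ^ n * ∑ k ∈ range (n + 1), t n k := by
          rw [← sum_range_succ' (t n), sum_range_succ (t n) (n + 1), top]; ring
      _ = ∑ k ∈ range (n + 1), t (n + 1) (k + 1) + t (n + 1) 0 := by
          rw [sum_congr rfl pascal, sum_sub_distrib, mul_sum]
          simp only [ht, qBinom_zero_right hq]
          ring
      _ = ∑ k ∈ range (n + 2), t (n + 1) k := (sum_range_succ' _ _).symm

theorem sum_qBinom_mul_qPoch (x : ℂ) (N : ℕ) :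
    ∑ m ∈ range (N + 1), (-1) ^ m * q ^ m.choose 2 * qBinom q N m * qPoch q (x * q ^ (N - m)) m
      = q ^ (2 * N.choose 2) * x ^ N := by
  set T : ℕ → ℕ → ℂ := fun m j => (-1) ^ m * q ^ m.choose 2 * qBinom q N m *
    ((-1) ^ j * q ^ j.choose 2 * qBinom q m j * (x * q ^ (N - m)) ^ j)
  have inner : ∀ j ∈ range (N + 1), ∑ m ∈ Ico j (N + 1), T m j
      = qBinom q N j * x ^ j * q ^ (2 * j.choose 2 + j * (N - j)) * qPoch q 1 (N - j) := by
    intro j hj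
    obtain ⟨s, rfl⟩ := Nat.exists_eq_add_of_le (Nat.lt_succ_iff.mp (mem_range.mp hj))
    rw [sum_Ico_eq_sum_range, show j + s + 1 - j = s + 1 by omega, Nat.add_sub_cancel_left,
      qPoch_eq_sum_qBinom hq, mul_sum]
    refine sum_congr rfl fun r hr => ?_
    obtain ⟨d, rfl⟩ := Nat.exists_eq_add_of_le (Nat.lt_succ_iff.mp (mem_range.mp hr))
    have sign : (-1 : ℂ) ^ (j + r) * (-1) ^ j = (-1) ^ r := by
      rw [← pow_add, show j + r + j = r + 2 * j by ring, pow_add, pow_mul]; norm_num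
    calc T (j + r) j = ((-1) ^ (j + r) * (-1) ^ j) *
          (qBinom q (j + (r + d)) (j + r) * qBinom q (j + r) j) *
          (q ^ (j + r).choose 2 * q ^ j.choose 2 * q ^ (j * d)) * x ^ j := by
          simp only [T, show j + (r + d) - (j + r) = d by omega]; ring
      _ = (-1) ^ r * (qBinom q (j + (r + d)) j * qBinom q (r + d) r) *
          (q ^ (2 * j.choose 2 + j * (r + d)) * q ^ r.choose 2) * x ^ j := by
          rw [sign, qBinom_mul_qBinom hq (Nat.le_add_right j r) (by omega),
            Nat.add_sub_cancel_left, Nat.add_sub_cancel_left, Nat.choose_two_add]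
          ring
      _ = _ := by ring
  calc _ = ∑ m ∈ range (N + 1), ∑ j ∈ range (m + 1), T m j :=
        sum_congr rfl fun m _ => by rw [qPoch_eq_sum_qBinom hq, mul_sum]
    _ = ∑ j ∈ range (N + 1), ∑ m ∈ Ico j (N + 1), T m j := by
        simp only [range_eq_Ico]
        exact (sum_Ico_Ico_comm 0 (N + 1) fun i j => T j i).symm
    _ = ∑ j ∈ range (N + 1),
          qBinom q N j * x ^ j * q ^ (2 * j.choose 2 + j * (N - j)) * qPoch q 1 (N - j) :=
        sum_congr rfl inner
    _ = q ^ (2 * N.choose 2) * x ^ N := by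
        rw [sum_eq_single_of_mem N (self_mem_range_succ N)]
        · rw [qBinom_self hq, Nat.sub_self, qPoch_zero]; ring
        · intro j hj hne
          rw [qPoch_one_eq_zero q (by have := mem_range.mp hj; omega), mul_zero]

theorem sum_range_eulerCoeff_mul_div_qPoch {x : ℂ} (hx : ∀ n, qPoch q x n ≠ 0) (z : ℂ) (n : ℕ) :
    ∑ k ∈ range (n + 1), eulerCoeff q k * z ^ k *
        (z ^ (n - k) / (qPoch q x (n - k) * qPoch q q (n - k)))
      = q ^ (2 * n.choose 2) * x ^ n * z ^ n / (qPoch q x n * qPoch q q n) := by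
  rw [← sum_qBinom_mul_qPoch hq, sum_mul, sum_div]
  refine sum_congr rfl fun k hk => ?_
  obtain ⟨d, rfl⟩ := Nat.exists_eq_add_of_le (Nat.lt_succ_iff.mp (mem_range.mp hk))
  have hsplit : qPoch q x (k + d) = qPoch q x d * qPoch q (x * q ^ d) k := by
    rw [add_comm, qPoch_add]
  have := hx d; have := hq k; have := hq d; have := hq (k + d)
  have : qPoch q (x * q ^ d) k ≠ 0 := right_ne_zero_of_mul (hsplit ▸ hx (k + d))
  rw [Nat.add_sub_cancel_left, qBinom_of_le (Nat.le_add_right k d), Nat.add_sub_cancel_left,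
    hsplit, eulerCoeff]
  field_simp
  ring

end Finite

section Analytic

variable {q : ℂ}

theorem one_sub_mul_pow_ne_zero {a : ℂ} (hq : ‖q‖ ≤ 1) (ha : ‖a‖ < 1) (j : ℕ) :
    1 - a * q ^ j ≠ 0 := by
  rw [sub_ne_zero]
  intro h
  have : ‖a * q ^ j‖ < 1 := by
    rw [norm_mul, norm_pow]
    exact mul_lt_one_of_nonneg_of_lt_one_left (norm_nonneg a) ha (pow_le_one₀ (norm_nonneg q) hq)
  rw [← h, norm_one] at this
  exact lt_irrefl _ this

theorem summable_norm_mul_pow (hq : ‖q‖ < 1) (a : ℂ) : Summable fun j : ℕ => ‖a * q ^ j‖ := by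
  simpa [norm_mul, norm_pow] using (summable_geometric_of_lt_one (norm_nonneg q) hq).mul_left ‖a‖

theorem multipliable_one_sub_mul_pow (hq : ‖q‖ < 1) (a : ℂ) :
    Multipliable fun j : ℕ => 1 - a * q ^ j := by
  simpa [sub_eq_add_neg] using
    multipliable_one_add_of_summable (f := fun j : ℕ => -(a * q ^ j))
      (by simpa using summable_norm_mul_pow hq a)

theorem tendsto_qPoch (hq : ‖q‖ < 1) (a : ℂ) : Tendsto (qPoch q a) atTop (𝓝 (qPochInf q a)) :=
  (multipliable_one_sub_mul_pow hq a).hasProd.tendsto_prod_nat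

theorem qPochInf_ne_zero (hq : ‖q‖ < 1) {a : ℂ} (ha : ∀ j, 1 - a * q ^ j ≠ 0) :
    qPochInf q a ≠ 0 := by
  simpa [qPochInf, sub_eq_add_neg] using
    tprod_one_add_ne_zero_of_summable (f := fun j : ℕ => -(a * q ^ j))
      (by simpa [sub_eq_add_neg] using ha) (by simpa using summable_norm_mul_pow hq a)

theorem exists_norm_inv_qPoch_le (hq : ‖q‖ < 1) {a : ℂ} (ha : ∀ j, 1 - a * q ^ j ≠ 0) :
    ∃ C, ∀ n, ‖(qPoch q a n)⁻¹‖ ≤ C :=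
  Asymptotics.isBigO_one_nat_atTop_iff.mp
    (((tendsto_qPoch hq a).inv₀ (qPochInf_ne_zero hq ha)).isBigO_one ℝ)

theorem tendsto_qBinom (hq : ‖q‖ < 1) (k : ℕ) :
    Tendsto (fun n => qBinom q n k) atTop (𝓝 (qPoch q q k)⁻¹) := by
  have hqq := one_sub_mul_pow_ne_zero hq.le hq
  have hL := qPochInf_ne_zero hq hqq
  have h := (tendsto_qPoch hq q).div (tendsto_const_nhds.mul
    ((tendsto_qPoch hq q).comp (tendsto_sub_atTop_nat k))) (mul_ne_zero (qPoch_ne_zero hqq k) hL)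
  rw [mul_comm, div_mul_eq_div_div, div_self hL, one_div] at h
  exact h.congr' ((eventually_ge_atTop k).mono fun n hn => (qBinom_of_le hn).symm)

theorem exists_norm_qBinom_le (hq : ‖q‖ < 1) : ∃ C, ∀ n k, ‖qBinom q n k‖ ≤ C := by
  obtain ⟨B, hB⟩ := Asymptotics.isBigO_one_nat_atTop_iff.mp ((tendsto_qPoch hq q).isBigO_one ℝ)
  obtain ⟨C, hC⟩ := exists_norm_inv_qPoch_le hq (one_sub_mul_pow_ne_zero hq.le hq)
  have hB0 : 0 ≤ B := (norm_nonneg _).trans (hB 0)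
  have hC0 : 0 ≤ C := (norm_nonneg _).trans (hC 0)
  refine ⟨B * (C * C), fun n k => ?_⟩
  rcases le_or_gt k n with hk | hk
  · rw [qBinom_of_le hk, div_eq_mul_inv, mul_inv, norm_mul, norm_mul]
    exact mul_le_mul (hB n) (mul_le_mul (hC k) (hC (n - k)) (norm_nonneg _) hC0)
      (by positivity) hB0
  · rw [qBinom_of_lt hk, norm_zero]
    positivity

theorem summable_norm_mul_pow_of_norm_le {c : ℕ → ℂ} {C : ℝ} (hc : ∀ k, ‖c k‖ ≤ C) {z : ℂ}
    (hz : ‖z‖ < 1) : Summable fun k => ‖c k * z ^ k‖ := by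
  refine .of_nonneg_of_le (fun k => norm_nonneg _) (fun k => ?_)
    ((summable_geometric_of_lt_one (norm_nonneg z) hz).mul_left C)
  rw [norm_mul, norm_pow]
  exact mul_le_mul_of_nonneg_right (hc k) (by positivity)

theorem summable_norm_eulerCoeff_mul_pow (hq : ‖q‖ < 1) {z : ℂ} (hz : ‖z‖ < 1) :
    Summable fun k => ‖eulerCoeff q k * z ^ k‖ := by
  obtain ⟨C, hC⟩ := exists_norm_inv_qPoch_le hq (one_sub_mul_pow_ne_zero hq.le hq)
  refine summable_norm_mul_pow_of_norm_le (C := C) (fun k => ?_) hz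
  rw [eulerCoeff, div_eq_mul_inv, norm_mul, norm_mul, norm_pow, norm_neg, norm_one, one_pow,
    one_mul, norm_pow]
  exact (mul_le_of_le_one_left (norm_nonneg _) (pow_le_one₀ (norm_nonneg q) hq.le)).trans (hC k)

theorem summable_norm_pow_div_qPoch_mul_qPoch (hq : ‖q‖ < 1) {x : ℂ}
    (hx : ∀ j, 1 - x * q ^ j ≠ 0) {z : ℂ} (hz : ‖z‖ < 1) :
    Summable fun n => ‖z ^ n / (qPoch q x n * qPoch q q n)‖ := by
  obtain ⟨C, hC⟩ := exists_norm_inv_qPoch_le hq hx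
  obtain ⟨D, hD⟩ := exists_norm_inv_qPoch_le hq (one_sub_mul_pow_ne_zero hq.le hq)
  simpa only [div_eq_inv_mul] using summable_norm_mul_pow_of_norm_le
    (c := fun n => (qPoch q x n * qPoch q q n)⁻¹) (C := C * D)
    (fun n => by
      rw [mul_inv, norm_mul]
      exact mul_le_mul (hC n) (hD n) (norm_nonneg _) ((norm_nonneg _).trans (hC n))) hz

theorem qPochInf_eq_tsum_eulerCoeff_mul_pow (hq : ‖q‖ < 1) {z : ℂ} (hz : ‖z‖ < 1) :
    qPochInf q z = ∑' k, eulerCoeff q k * z ^ k := by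
  obtain ⟨C, hC⟩ := exists_norm_qBinom_le hq
  set g : ℕ → ℕ → ℂ := fun n k => (-1) ^ k * q ^ k.choose 2 * qBinom q n k * z ^ k
  have partial_eq : ∀ n, qPoch q z n = ∑' k, g n k := fun n => by
    rw [qPoch_eq_sum_qBinom (qPoch_ne_zero (one_sub_mul_pow_ne_zero hq.le hq)), tsum_eq_sum]
    intro k hk
    simp [g, qBinom_of_lt (not_lt.mp (mt mem_range.mpr hk))]
  have limit : ∀ k, Tendsto (g · k) atTop (𝓝 (eulerCoeff q k * z ^ k)) := fun k => by
    simpa [eulerCoeff, div_eq_mul_inv] using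
      ((tendsto_qBinom hq k).const_mul ((-1) ^ k * q ^ k.choose 2)).mul_const (z ^ k)
  have bound : ∀ n k, ‖g n k‖ ≤ C * ‖z‖ ^ k := fun n k => by
    simp only [g, norm_mul, norm_pow, norm_neg, norm_one, one_pow, one_mul]
    exact mul_le_mul_of_nonneg_right
      ((mul_le_of_le_one_left (norm_nonneg _) (pow_le_one₀ (norm_nonneg q) hq.le)).trans (hC n k))
      (by positivity)
  exact tendsto_nhds_unique ((tendsto_qPoch hq z).congr partial_eq)
    (tendsto_tsum_of_dominated_convergence
      ((summable_geometric_of_lt_one (norm_nonneg z) hz).mul_left C) limit (.of_forall bound))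

end Analytic

theorem hahn_relation_general (q : ℂ) (hq1 : ‖q‖ < 1)
    (a : ℂ) (ha : ∀ j : ℕ, a * q ^ (j + 1) ≠ 1) (z : ℂ) (hz : ‖z‖ < 1) :
    ∑' n : ℕ, q ^ (n ^ 2) * a ^ n * z ^ n / (qPoch q (a * q) n * qPoch q q n) =
      qPochInf q z * ∑' n : ℕ, z ^ n / (qPoch q (a * q) n * qPoch q q n) := by
  have hqq : ∀ j, 1 - q * q ^ j ≠ 0 := one_sub_mul_pow_ne_zero hq1.le hq1
  have haq : ∀ j, 1 - a * q * q ^ j ≠ 0 := fun j => by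
    rw [mul_assoc, ← pow_succ', sub_ne_zero]
    exact (ha j).symm
  rw [qPochInf_eq_tsum_eulerCoeff_mul_pow hq1 hz,
    tsum_mul_tsum_eq_tsum_sum_range_of_summable_norm (summable_norm_eulerCoeff_mul_pow hq1 hz)
      (summable_norm_pow_div_qPoch_mul_qPoch hq1 haq hz)]
  refine tsum_congr fun n => ?_
  rw [sum_range_eulerCoeff_mul_div_qPoch (qPoch_ne_zero hqq) (qPoch_ne_zero haq), mul_pow,
    mul_comm (a ^ n), ← mul_assoc, ← pow_add, Nat.two_mul_choose_two_add_self]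

/-- Hahn's relation between Jackson's first and second q-Bessel functions, series form. -/
theorem hahn_relation (q : ℂ) (hq0 : 0 < ‖q‖) (hq1 : ‖q‖ < 1)
    (a : ℂ) (ha : ∀ j : ℕ, a * q ^ (j + 1) ≠ 1) (z : ℂ) (hz : ‖z‖ < 1) :
    ∑' n : ℕ, q ^ (n ^ 2) * a ^ n * z ^ n / (qPoch q (a * q) n * qPoch q q n) =
      qPochInf q z * ∑' n : ℕ, z ^ n / (qPoch q (a * q) n * qPoch q q n) :=
  hahn_relation_general q hq1 a ha z hz
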